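/- The counting-regular languages are not closed under union or intersection with regular languages: there exist a context-free counting-regular language L ⊆ {0,1}* and a regular language R ⊆ {0,1}* such that neither L ∩ R nor L ∪ R is counting-regular. -/

import Mathlib

/-!
The words of length `n + 1` accepted from a state of a DFA are counted by summing over the first
letter the counts of length `n` from the successor states. So the vector of these counts modulo
`2` evolves under a fixed map of a finite set, and the counting function of a regular language,
hence of every counting-regular one, is eventually periodic modulo `2`.

Let `L` consist of the balanced binary words (as many `0`s as `1`s) beginning with `0` and the
unbalanced ones beginning with `1`, and let `R = ε + 0{0,1}*`. As many balanced words of a given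
length begin with `0` as with `1`, so `L` has `2 ^ (n - 1)` words of length `n ≥ 1`, like
`0{0,1}*`. But `L ∩ R` has no words of odd length and `C(2m+1, m)` words of length `2m + 2`, and
`L ∪ R` has the same counts modulo `2`. By Lucas' theorem `C(2m+1, m)` is odd exactly when `m + 1`
is a power of two, which is not eventually periodic.

A grammar for `L` is sound because the intended language of each nonterminal is closed under its
rules, and complete because a word with more `a`s than `b`s splits as `u a t` with `u` balanced,
cutting at the first point where the surplus of `a` becomes positive.
-/

/-- The counting function of a language: the number of words of length `n`. -/
noncomputable def countFn {α : Type*} (L : Set (List α)) (n : ℕ) : ℕ :=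
  Set.ncard {w | w ∈ L ∧ w.length = n}

/-- A language is regular if it is accepted by a DFA with finitely many states. -/
def IsRegularLang {α : Type*} (L : Set (List α)) : Prop :=
  ∃ (σ : Type) (_ : Fintype σ) (M : DFA α σ), ∀ w, w ∈ M.accepts ↔ w ∈ L

/-- A language is counting-regular if some regular language over a (possibly different)
finite alphabet has the same counting function. -/
def CountingRegular {α : Type*} (L : Set (List α)) : Prop :=
  ∃ (β : Type) (_ : Fintype β) (L' : Set (List β)),
    IsRegularLang L' ∧ ∀ n, countFn L' n = countFn L n


/-- A language is context-free if it is generated by some context-free grammar. -/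
def IsCFLang {α : Type} (L : Set (List α)) : Prop :=
  ∃ g : ContextFreeGrammar.{0} α, ∀ w, w ∈ g.language ↔ w ∈ L

section countFn

variable {α : Type*}

lemma countFn_congr {L L' : Set (List α)} {n : ℕ}
    (h : ∀ w : List α, w.length = n → (w ∈ L ↔ w ∈ L')) : countFn L n = countFn L' n := by
  unfold countFn
  congr 1
  ext w
  constructor <;> rintro ⟨hw, rfl⟩ <;> simp_all

lemma countFn_zero_of_nil_notMem {L : Set (List α)} (h : [] ∉ L) : countFn L 0 = 0 := by
  have : {w | w ∈ L ∧ w.length = 0} = ∅ :=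
    Set.eq_empty_of_forall_notMem fun w ⟨hw, hlen⟩ => h (List.length_eq_zero_iff.1 hlen ▸ hw)
  rw [countFn, this, Set.ncard_empty]

lemma countFn_empty (n : ℕ) : countFn (∅ : Set (List α)) n = 0 := by
  simp [countFn]

variable [Fintype α]

def lengthSuccEquivSigma (L : Set (List α)) (n : ℕ) :
    {w // w ∈ L ∧ w.length = n + 1} ≃ Σ a : α, {w // w ∈ {v | a :: v ∈ L} ∧ w.length = n} where
  toFun
    | ⟨a :: w, h⟩ => ⟨a, w, h.1, by simpa using h.2⟩
  invFun x := ⟨x.1 :: x.2.1, x.2.2.1, by simp [x.2.2.2]⟩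
  left_inv
    | ⟨_ :: _, _⟩ => rfl
  right_inv _ := rfl

lemma countFn_succ (L : Set (List α)) (n : ℕ) :
    countFn L (n + 1) = ∑ a : α, countFn {w | a :: w ∈ L} n := by
  have (L' : Set (List α)) : Finite {w // w ∈ L' ∧ w.length = n} :=
    ((List.finite_length_eq α n).subset fun _ h => h.2).to_subtype
  simp only [countFn, ← Nat.card_coe_set_eq]
  exact (Nat.card_congr (lengthSuccEquivSigma L n)).trans Nat.card_sigma

lemma countFn_univ (n : ℕ) : countFn (Set.univ : Set (List α)) n = Fintype.card α ^ n := by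
  induction n with
  | zero => simp [countFn, List.length_eq_zero_iff]
  | succ n ih => simp [countFn_succ, ih, pow_succ, mul_comm]

lemma countFn_add_countFn_compl (L : Set (List α)) (n : ℕ) :
    countFn L n + countFn Lᶜ n = Fintype.card α ^ n := by
  have hfin (L' : Set (List α)) : {w | w ∈ L' ∧ w.length = n}.Finite :=
    (List.finite_length_eq α n).subset fun _ h => h.2
  rw [← countFn_univ, countFn, countFn, countFn, ← Set.ncard_union_eq _ (hfin _) (hfin _)]
  · congr 1
    ext w
    by_cases w ∈ L <;> simp_all
  · exact Set.disjoint_left.2 fun _ h h' => h'.1 h.1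

end countFn

lemma exists_periodic_of_recurrence {X : Type*} [Finite X] {v : ℕ → X} (Φ : X → X)
    (hv : ∀ n, v (n + 1) = Φ (v n)) : ∃ N p, 0 < p ∧ ∀ n, N ≤ n → v (n + p) = v n := by
  obtain ⟨i, j, hij, hvij⟩ := Finite.exists_ne_map_eq_of_infinite v
  wlog hlt : i < j generalizing i j
  · exact this j i hij.symm hvij.symm (by omega)
  refine ⟨i, j - i, by omega, fun n hn => ?_⟩
  induction n, hn using Nat.le_induction with
  | base => rw [Nat.add_sub_cancel' hlt.le, hvij]
  | succ n _ ih => rw [Nat.add_right_comm, hv, ih, hv]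

lemma IsRegularLang.exists_countFn_modEq {α : Type*} [Fintype α] {L : Set (List α)}
    (hL : IsRegularLang L) (q : ℕ) [NeZero q] :
    ∃ N p, 0 < p ∧ ∀ n, N ≤ n → countFn L (n + p) ≡ countFn L n [MOD q] := by
  obtain ⟨σ, _, M, hM⟩ := hL
  have hLM : L = {w | M.evalFrom M.start w ∈ M.accept} := Set.ext fun w => (hM w).symm
  let v (n : ℕ) (s : σ) : ZMod q := countFn {w | M.evalFrom s w ∈ M.accept} n
  let Φ (u : σ → ZMod q) (s : σ) : ZMod q := ∑ a : α, u (M.step s a)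
  have hv (n : ℕ) : v (n + 1) = Φ (v n) := by
    funext s
    simp only [v, Φ]
    rw [countFn_succ, Nat.cast_sum]
    rfl
  obtain ⟨N, p, hp, hper⟩ := exists_periodic_of_recurrence Φ hv
  refine ⟨N, p, hp, fun n hn => ?_⟩
  rw [hLM, ← ZMod.natCast_eq_natCast_iff]
  exact congrFun (hper n hn) M.start

lemma CountingRegular.exists_countFn_modEq {α : Type*} {L : Set (List α)}
    (hL : CountingRegular L) (q : ℕ) [NeZero q] :
    ∃ N p, 0 < p ∧ ∀ n, N ≤ n → countFn L (n + p) ≡ countFn L n [MOD q] := by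
  obtain ⟨β, _, L', hL', hcount⟩ := hL
  simpa only [hcount] using hL'.exists_countFn_modEq q

lemma Nat.choose_two_mul_add_one_modEq (m : ℕ) :
    (2 * m + 1).choose m ≡ (1 : ℕ).choose (m % 2) * m.choose (m / 2) [MOD 2] := by
  convert Choose.choose_modEq_choose_mod_mul_choose_div_nat (n := 2 * m + 1) (k := m) (p := 2)
    using 3 <;> omega

lemma Nat.choose_two_mul_add_one_mod_two_eq_one_iff (m : ℕ) :
    (2 * m + 1).choose m % 2 = 1 ↔ ∃ k, m + 1 = 2 ^ k := by
  induction m using Nat.strong_induction_on with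
  | _ m ih =>
  rw [choose_two_mul_add_one_modEq]
  obtain ⟨j, rfl | rfl⟩ : ∃ j, m = 2 * j ∨ m = 2 * j + 1 := ⟨m / 2, by omega⟩
  · rcases Nat.eq_zero_or_pos j with rfl | hj
    · exact ⟨fun _ => ⟨0, rfl⟩, fun _ => rfl⟩
    have heven : 2 ∣ (2 * j).choose j := by
      simpa [centralBinom_eq_two_mul_choose] using two_dvd_centralBinom_of_one_le hj
    rw [show 2 * j / 2 = j by omega, show 2 * j % 2 = 0 by omega, choose_zero_right, one_mul]
    refine ⟨fun h => by omega, fun ⟨k, hk⟩ => ?_⟩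
    cases k with
    | zero => omega
    | succ k => rw [pow_succ] at hk; omega
  · rw [show (2 * j + 1) / 2 = j by omega, show (2 * j + 1) % 2 = 1 by omega, choose_self,
      one_mul, ih j (by omega)]
    constructor
    · rintro ⟨k, hk⟩
      exact ⟨k + 1, by rw [pow_succ]; omega⟩
    · rintro ⟨_ | k, hk⟩
      · omega
      · exact ⟨k, by rw [pow_succ] at hk; omega⟩

theorem not_countingRegular_of_countFn_mod_two {α : Type*} {K : Set (List α)}
    (hodd : ∀ m, countFn K (2 * m + 1) % 2 = 0)
    (heven : ∀ m, countFn K (2 * m + 2) % 2 = (2 * m + 1).choose m % 2) :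
    ¬ CountingRegular K := by
  intro hK
  obtain ⟨N, p, hp, hper⟩ := hK.exists_countFn_modEq 2
  obtain ⟨k, hk⟩ : ∃ k, N + p < 2 ^ k := ⟨N + p, Nat.lt_two_pow_self⟩
  have hpos : 0 < 2 ^ k := Nat.two_pow_pos k
  have hcount_odd : countFn K (2 ^ (k + 1)) % 2 = 1 := by
    rw [show 2 ^ (k + 1) = 2 * (2 ^ k - 1) + 2 by rw [pow_succ]; omega, heven,
      Nat.choose_two_mul_add_one_mod_two_eq_one_iff]
    exact ⟨k, by omega⟩
  have hshift := hper (2 ^ (k + 1)) (by rw [pow_succ]; omega)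
  unfold Nat.ModEq at hshift
  obtain ⟨q, rfl | rfl⟩ : ∃ q, p = 2 * q ∨ p = 2 * q + 1 := ⟨p / 2, by omega⟩
  · -- the shifted length is `2 * (2 ^ k + q)`, and `2 ^ k + q` lies strictly between `2 ^ k`
    -- and `2 ^ (k + 1)`
    have hnotpow : ¬ ∃ j, 2 ^ k - 1 + q + 1 = 2 ^ j := by
      rintro ⟨j, hj⟩
      have hkj : k < j := (Nat.pow_lt_pow_iff_right (show 1 < 2 by norm_num)).1 (by omega)
      have hjk : j < k + 1 :=
        (Nat.pow_lt_pow_iff_right (show 1 < 2 by norm_num)).1 (by rw [pow_succ]; omega)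
      omega
    have := (Nat.choose_two_mul_add_one_mod_two_eq_one_iff _).not.2 hnotpow
    rw [show 2 ^ (k + 1) + 2 * q = 2 * (2 ^ k - 1 + q) + 2 by rw [pow_succ]; omega, heven] at hshift
    omega
  · rw [show 2 ^ (k + 1) + (2 * q + 1) = 2 * (2 ^ k + q) + 1 by rw [pow_succ]; omega,
      hodd] at hshift
    omega

def headDFA (α : Type*) (S : Set (Option α)) : DFA α (Option α) where
  step s a := s.or (some a)
  start := none
  accept := S

lemma headDFA_evalFrom {α : Type*} (S : Set (Option α)) (s : Option α) (w : List α) :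
    (headDFA α S).evalFrom s w = s.or w.head? := by
  induction w generalizing s with
  | nil => simp
  | cons a w ih => rw [DFA.evalFrom_cons, ih]; cases s <;> rfl

lemma isRegularLang_setOf_head?_mem {α : Type} [Fintype α] (S : Set (Option α)) :
    IsRegularLang {w : List α | w.head? ∈ S} :=
  ⟨Option α, inferInstance, headDFA α S, fun w => by
    rw [DFA.mem_accepts, DFA.eval, headDFA_evalFrom]; rfl⟩

lemma List.exists_eq_append_cons_of_count_lt {α : Type*} [DecidableEq α] {a b : α} (hab : a ≠ b)
    {v : List α} (h : v.count b < v.count a) :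
    ∃ u t, v = u ++ a :: t ∧ u.count a = u.count b := by
  -- cut before the first `a` at which the surplus of `a` over `b` exceeds `c`
  suffices ∀ (v : List α) (c : ℕ), v.count b + c < v.count a →
      ∃ u t, v = u ++ a :: t ∧ u.count a = u.count b + c from this v 0 h
  intro v
  induction v with
  | nil => simp
  | cons x v ih =>
    intro c hc
    by_cases hxa : x = a
    · subst hxa
      rw [count_cons_self, count_cons_of_ne hab] at hc
      rcases c with _ | c
      · exact ⟨[], v, rfl, rfl⟩
      · obtain ⟨u, t, rfl, hu⟩ := ih c (by omega)
        exact ⟨x :: u, t, rfl, by rw [count_cons_self, count_cons_of_ne hab]; omega⟩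
    by_cases hxb : x = b
    · subst hxb
      rw [count_cons_self, count_cons_of_ne hab.symm] at hc
      obtain ⟨u, t, rfl, hu⟩ := ih (c + 1) (by omega)
      exact ⟨x :: u, t, rfl, by rw [count_cons_self, count_cons_of_ne hab.symm]; omega⟩
    · rw [count_cons_of_ne hxa, count_cons_of_ne hxb] at hc
      obtain ⟨u, t, rfl, hu⟩ := ih c hc
      exact ⟨x :: u, t, rfl, by rw [count_cons_of_ne hxa, count_cons_of_ne hxb, hu]⟩

namespace ContextFreeGrammar

variable {T N : Type*}

def symbolLang (I : N → Language T) : Symbol T N → Language T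
  | .terminal a => {[a]}
  | .nonterminal X => I X

/-- The words obtained from the sentential form `u` by replacing each nonterminal `X` with a word
of `I X`. -/
def substLang (I : N → Language T) (u : List (Symbol T N)) : Language T :=
  (u.map (symbolLang I)).prod

section substLang

variable {I : N → Language T} {w : List T}

lemma mem_substLang_nil : w ∈ substLang I [] ↔ w = [] := Iff.rfl

lemma mem_substLang_cons_terminal {a : T} {u : List (Symbol T N)} :
    w ∈ substLang I (.terminal a :: u) ↔ ∃ v ∈ substLang I u, a :: v = w := by
  simp only [substLang, List.map_cons, List.prod_cons, Language.mem_mul]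
  constructor
  · rintro ⟨_, rfl, v, hv, rfl⟩
    exact ⟨v, hv, rfl⟩
  · rintro ⟨v, hv, rfl⟩
    exact ⟨[a], rfl, v, hv, rfl⟩

lemma mem_substLang_cons_nonterminal {X : N} {u : List (Symbol T N)} :
    w ∈ substLang I (.nonterminal X :: u) ↔ ∃ x ∈ I X, ∃ y ∈ substLang I u, x ++ y = w :=
  Language.mem_mul

lemma mem_substLang_map_terminal (w : List T) : w ∈ substLang I (w.map .terminal) := by
  induction w with
  | nil => rfl
  | cons a w ih => exact mem_substLang_cons_terminal.2 ⟨w, ih, rfl⟩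

end substLang

variable {g : ContextFreeGrammar T}

lemma substLang_le_of_produces (I : g.NT → Language T)
    (hI : ∀ r ∈ g.rules, substLang I r.output ≤ I r.input) {u v : List (Symbol T g.NT)}
    (h : g.Produces u v) : substLang I v ≤ substLang I u := by
  obtain ⟨r, hr, hrw⟩ := h
  obtain ⟨p, q, rfl, rfl⟩ := hrw.exists_parts
  simp only [substLang, List.map_append, List.prod_append, List.map_cons, List.map_nil,
    List.prod_cons, List.prod_nil, mul_one]
  gcongr
  exact hI r hr

theorem language_le_of_substLang_le (I : g.NT → Language T)
    (hI : ∀ r ∈ g.rules, substLang I r.output ≤ I r.input) : g.language ≤ I g.initial := by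
  intro w hw
  have hder : ∀ {u v}, g.Derives u v → substLang I v ≤ substLang I u := fun h => by
    induction h with
    | refl => exact le_rfl
    | tail _ hp ih => exact (substLang_le_of_produces I hI hp).trans ih
  simpa [substLang, symbolLang] using
    hder ((mem_language_iff g w).1 hw) (mem_substLang_map_terminal w)

lemma derives_of_mem_rules {X : g.NT} {u : List (Symbol T g.NT)} {w : List T}
    (hr : ⟨X, u⟩ ∈ g.rules) (h : g.Derives u (w.map .terminal)) :
    g.Derives [.nonterminal X] (w.map .terminal) :=
  Produces.trans_derives ⟨_, hr, ContextFreeRule.Rewrites.input_output⟩ h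

lemma Derives.cons_terminal {u : List (Symbol T g.NT)} {w : List T} (a : T)
    (h : g.Derives u (w.map .terminal)) :
    g.Derives (.terminal a :: u) ((a :: w).map .terminal) :=
  h.append_left [.terminal a]

lemma Derives.cons {s : Symbol T g.NT} {u : List (Symbol T g.NT)} {x y : List T}
    (hs : g.Derives [s] (x.map .terminal)) (hu : g.Derives u (y.map .terminal)) :
    g.Derives (s :: u) ((x ++ y).map .terminal) := by
  rw [List.map_append]
  exact (hs.append_right u).trans (hu.append_left _)

end ContextFreeGrammar

lemma List.count_zero_add_count_one (w : List (Fin 2)) : w.count 0 + w.count 1 = w.length := by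
  induction w with
  | nil => rfl
  | cons a w ih => fin_cases a <;> simp <;> omega

lemma countFn_setOf_count_one_eq (n k : ℕ) :
    countFn {w : List (Fin 2) | w.count 1 = k} n = n.choose k := by
  induction n generalizing k with
  | zero =>
    cases k with
    | zero => rw [countFn_congr (L' := Set.univ) (by simp +contextual [List.length_eq_zero_iff]),
        countFn_univ]; rfl
    | succ k => rw [countFn_congr (L' := ∅) (by simp +contextual [List.length_eq_zero_iff]),
        countFn_empty]; rfl
  | succ n ih =>
    rw [countFn_succ, Fin.sum_univ_two]
    cases k with
    | zero => simp [ih, countFn_empty]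
    | succ k =>
      have h0 : {w | 0 :: w ∈ {w : List (Fin 2) | w.count 1 = k + 1}} = {w | w.count 1 = k + 1} :=
        by ext; simp
      have h1 : {w | 1 :: w ∈ {w : List (Fin 2) | w.count 1 = k + 1}} = {w | w.count 1 = k} :=
        by ext; simp
      rw [h0, h1, ih, ih, Nat.choose_succ_succ', add_comm]

def IsBalanced (w : List (Fin 2)) : Prop := w.count 0 = w.count 1

lemma isBalanced_iff_count_eq {a b : Fin 2} (hab : a ≠ b) {w : List (Fin 2)} :
    IsBalanced w ↔ w.count a = w.count b := by
  fin_cases a <;> fin_cases b <;> simp_all [IsBalanced, eq_comm]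

lemma exists_eq_append_cons_of_isBalanced_cons {a b : Fin 2} (hab : a ≠ b) {v : List (Fin 2)}
    (h : IsBalanced (a :: v)) : ∃ u t, v = u ++ b :: t ∧ IsBalanced u ∧ IsBalanced t := by
  rw [isBalanced_iff_count_eq hab, List.count_cons_self, List.count_cons_of_ne hab] at h
  obtain ⟨u, t, rfl, hu⟩ := List.exists_eq_append_cons_of_count_lt hab.symm (v := v) (by omega)
  refine ⟨u, t, rfl, (isBalanced_iff_count_eq hab.symm).2 hu, (isBalanced_iff_count_eq hab).2 ?_⟩
  rw [List.count_append, List.count_append, List.count_cons_self,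
    List.count_cons_of_ne hab.symm] at h
  omega

lemma countFn_isBalanced_cons_of_even (a : Fin 2) (m : ℕ) :
    countFn {v | IsBalanced (a :: v)} (2 * m) = 0 := by
  rw [countFn_congr (L' := ∅), countFn_empty]
  intro v hv
  have := List.count_zero_add_count_one (a :: v)
  rw [List.length_cons] at this
  simp only [IsBalanced, Set.mem_ofPred_eq, Set.mem_empty_iff_false, iff_false]
  omega

lemma countFn_isBalanced_cons_of_odd (a : Fin 2) (m : ℕ) :
    countFn {v | IsBalanced (a :: v)} (2 * m + 1) = (2 * m + 1).choose m := by
  match a with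
  | 0 =>
    rw [← Nat.choose_symm_half, ← countFn_setOf_count_one_eq]
    refine countFn_congr fun v hv => ?_
    have := List.count_zero_add_count_one v
    simp only [Set.mem_ofPred_eq, IsBalanced, List.count_cons_self,
      List.count_cons_of_ne zero_ne_one]
    omega
  | 1 =>
    rw [← countFn_setOf_count_one_eq]
    refine countFn_congr fun v hv => ?_
    have := List.count_zero_add_count_one v
    simp only [Set.mem_ofPred_eq, IsBalanced, List.count_cons_self,
      List.count_cons_of_ne one_ne_zero]
    omega

lemma countFn_isBalanced_cons_zero_eq_one (n : ℕ) :
    countFn {v | IsBalanced (0 :: v)} n = countFn {v | IsBalanced (1 :: v)} n := by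
  obtain ⟨m, rfl | rfl⟩ : ∃ m, n = 2 * m ∨ n = 2 * m + 1 := ⟨n / 2, by omega⟩
  · simp only [countFn_isBalanced_cons_of_even]
  · simp only [countFn_isBalanced_cons_of_odd]

def zeroBalOneUnbal : Set (List (Fin 2)) :=
  {w | (w.head? = some 0 ∧ IsBalanced w) ∨ (w.head? = some 1 ∧ ¬ IsBalanced w)}

def nilOrStartsZero : Set (List (Fin 2)) := {w | w = [] ∨ w.head? = some 0}

lemma isRegularLang_nilOrStartsZero : IsRegularLang nilOrStartsZero := by
  convert isRegularLang_setOf_head?_mem ({none, some 0} : Set (Option (Fin 2))) using 1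
  ext (_ | _) <;> simp [nilOrStartsZero]

inductive BalNT
  | start
  | balanced
  | zerosGe
  | onesGe
deriving DecidableEq

def BalNT.lang : BalNT → Language (Fin 2)
  | start => zeroBalOneUnbal
  | balanced => {w | IsBalanced w}
  | zerosGe => {w | w.count 1 ≤ w.count 0}
  | onesGe => {w | w.count 0 ≤ w.count 1}

namespace BalNT

variable {w : List (Fin 2)}

@[simp] lemma mem_lang_start : w ∈ start.lang ↔ w ∈ zeroBalOneUnbal := Iff.rfl
@[simp] lemma mem_lang_balanced : w ∈ balanced.lang ↔ IsBalanced w := Iff.rfl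
@[simp] lemma mem_lang_zerosGe : w ∈ zerosGe.lang ↔ w.count 1 ≤ w.count 0 := Iff.rfl
@[simp] lemma mem_lang_onesGe : w ∈ onesGe.lang ↔ w.count 0 ≤ w.count 1 := Iff.rfl

end BalNT

-- reducible, so that membership in `grammar.rules` is decidable
open Symbol BalNT in
abbrev zeroBalOneUnbal.grammar : ContextFreeGrammar.{0} (Fin 2) where
  NT := BalNT
  initial := start
  rules :=
    { ⟨start, [terminal 0, nonterminal balanced, terminal 1, nonterminal balanced]⟩,
      ⟨start, [terminal 1, nonterminal onesGe]⟩,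
      ⟨start, [terminal 1, nonterminal balanced, terminal 0, nonterminal balanced, terminal 0,
        nonterminal zerosGe]⟩,
      ⟨balanced, []⟩,
      ⟨balanced, [terminal 0, nonterminal balanced, terminal 1, nonterminal balanced]⟩,
      ⟨balanced, [terminal 1, nonterminal balanced, terminal 0, nonterminal balanced]⟩,
      ⟨zerosGe, [nonterminal balanced]⟩,
      ⟨zerosGe, [nonterminal balanced, terminal 0, nonterminal zerosGe]⟩,
      ⟨onesGe, [nonterminal balanced]⟩,
      ⟨onesGe, [nonterminal balanced, terminal 1, nonterminal onesGe]⟩ }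

namespace zeroBalOneUnbal

open ContextFreeGrammar Symbol

lemma countFn_succ_eq_two_pow (n : ℕ) : countFn zeroBalOneUnbal (n + 1) = 2 ^ n := by
  have h0 : {w | 0 :: w ∈ zeroBalOneUnbal} = {v | IsBalanced (0 :: v)} := by
    ext; simp [zeroBalOneUnbal]
  have h1 : {w | 1 :: w ∈ zeroBalOneUnbal} = {v | IsBalanced (1 :: v)}ᶜ := by
    ext; simp [zeroBalOneUnbal]
  rw [countFn_succ, Fin.sum_univ_two, h0, h1, countFn_isBalanced_cons_zero_eq_one]
  simpa using countFn_add_countFn_compl {v | IsBalanced (1 :: v)} n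

lemma countingRegular : CountingRegular zeroBalOneUnbal := by
  refine ⟨Fin 2, inferInstance, _, isRegularLang_setOf_head?_mem {some 0}, fun n => ?_⟩
  cases n with
  | zero =>
    rw [countFn_zero_of_nil_notMem (by simp),
      countFn_zero_of_nil_notMem (by simp [zeroBalOneUnbal])]
  | succ n =>
    rw [countFn_succ_eq_two_pow, countFn_succ, Fin.sum_univ_two]
    simp [countFn_univ, countFn_empty]

lemma countFn_inter_nilOrStartsZero_succ (n : ℕ) :
    countFn (zeroBalOneUnbal ∩ nilOrStartsZero) (n + 1) = countFn {v | IsBalanced (0 :: v)} n := by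
  rw [countFn_succ, Fin.sum_univ_two]
  simp [zeroBalOneUnbal, nilOrStartsZero, countFn_empty]

lemma countFn_union_nilOrStartsZero_succ_add (n : ℕ) :
    countFn (zeroBalOneUnbal ∪ nilOrStartsZero) (n + 1) + countFn {v | IsBalanced (1 :: v)} n
      = 2 ^ n + 2 ^ n := by
  have h0 : {w | 0 :: w ∈ zeroBalOneUnbal ∪ nilOrStartsZero} = Set.univ := by
    ext; simp [nilOrStartsZero]
  have h1 : {w | 1 :: w ∈ zeroBalOneUnbal ∪ nilOrStartsZero} = {v | IsBalanced (1 :: v)}ᶜ := by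
    ext; simp [zeroBalOneUnbal, nilOrStartsZero]
  have := countFn_add_countFn_compl {v | IsBalanced (1 :: v)} n
  rw [countFn_succ, Fin.sum_univ_two, h0, h1, countFn_univ]
  simp only [Fintype.card_fin] at this ⊢
  omega

lemma not_countingRegular_inter_nilOrStartsZero :
    ¬ CountingRegular (zeroBalOneUnbal ∩ nilOrStartsZero) := by
  apply not_countingRegular_of_countFn_mod_two
  · intro m
    rw [countFn_inter_nilOrStartsZero_succ, countFn_isBalanced_cons_of_even]
  · intro m
    rw [countFn_inter_nilOrStartsZero_succ, countFn_isBalanced_cons_of_odd]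

lemma not_countingRegular_union_nilOrStartsZero :
    ¬ CountingRegular (zeroBalOneUnbal ∪ nilOrStartsZero) := by
  apply not_countingRegular_of_countFn_mod_two
  · intro m
    have := countFn_union_nilOrStartsZero_succ_add (2 * m)
    rw [countFn_isBalanced_cons_of_even] at this
    omega
  · intro m
    have := countFn_union_nilOrStartsZero_succ_add (2 * m + 1)
    rw [countFn_isBalanced_cons_of_odd, pow_succ] at this
    rw [show 2 * m + 2 = 2 * m + 1 + 1 from rfl]
    omega

lemma substLang_le (r : ContextFreeRule (Fin 2) BalNT) (hr : r ∈ grammar.rules) :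
    substLang BalNT.lang r.output ≤ r.input.lang := by
  unfold grammar at hr
  simp only [Finset.mem_insert, Finset.mem_singleton] at hr
  rcases hr with rfl | rfl | rfl | rfl | rfl | rfl | rfl | rfl | rfl | rfl <;>
  · show ∀ w, w ∈ substLang _ _ → w ∈ _
    simp only [mem_substLang_cons_terminal, mem_substLang_cons_nonterminal, mem_substLang_nil,
      forall_exists_index, and_imp]
    intros
    subst_vars
    simp_all [zeroBalOneUnbal, IsBalanced] <;> omega

lemma derives_balanced (w : List (Fin 2)) (hw : IsBalanced w) :
    grammar.Derives [nonterminal BalNT.balanced] (w.map terminal) := by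
  induction h : w.length using Nat.strong_induction_on generalizing w with
  | _ n ih =>
  match w with
  | [] => exact derives_of_mem_rules (by decide) (Derives.refl _)
  | 0 :: v =>
    obtain ⟨u, t, rfl, hu, ht⟩ := exists_eq_append_cons_of_isBalanced_cons (b := 1) (by decide) hw
    simp only [List.length_cons, List.length_append] at h
    exact derives_of_mem_rules (by decide)
      ((ih u.length (by omega) u hu rfl).cons
        ((ih t.length (by omega) t ht rfl).cons_terminal 1) |>.cons_terminal 0)
  | 1 :: v =>
    obtain ⟨u, t, rfl, hu, ht⟩ := exists_eq_append_cons_of_isBalanced_cons (b := 0) (by decide) hw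
    simp only [List.length_cons, List.length_append] at h
    exact derives_of_mem_rules (by decide)
      ((ih u.length (by omega) u hu rfl).cons
        ((ih t.length (by omega) t ht rfl).cons_terminal 0) |>.cons_terminal 1)

lemma derives_zerosGe (w : List (Fin 2)) (hw : w.count 1 ≤ w.count 0) :
    grammar.Derives [nonterminal BalNT.zerosGe] (w.map terminal) := by
  induction h : w.length using Nat.strong_induction_on generalizing w with
  | _ n ih =>
  by_cases hbal : IsBalanced w
  · exact derives_of_mem_rules (by decide) (derives_balanced w hbal)
  obtain ⟨u, t, rfl, hu⟩ := List.exists_eq_append_cons_of_count_lt (v := w) (by decide)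
    (show w.count 1 < w.count 0 by unfold IsBalanced at hbal; omega)
  simp only [IsBalanced, List.count_append, List.count_cons_self,
    List.count_cons_of_ne zero_ne_one, List.length_append, List.length_cons] at hw hbal h
  exact derives_of_mem_rules (by decide)
    ((derives_balanced u hu).cons ((ih t.length (by omega) t (by omega) rfl).cons_terminal 0))

lemma derives_onesGe (w : List (Fin 2)) (hw : w.count 0 ≤ w.count 1) :
    grammar.Derives [nonterminal BalNT.onesGe] (w.map terminal) := by
  induction h : w.length using Nat.strong_induction_on generalizing w with
  | _ n ih =>
  by_cases hbal : IsBalanced w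
  · exact derives_of_mem_rules (by decide) (derives_balanced w hbal)
  obtain ⟨u, t, rfl, hu⟩ := List.exists_eq_append_cons_of_count_lt (v := w) (by decide)
    (show w.count 0 < w.count 1 by unfold IsBalanced at hbal; omega)
  simp only [IsBalanced, List.count_append, List.count_cons_self,
    List.count_cons_of_ne one_ne_zero, List.length_append, List.length_cons] at hw hbal h
  exact derives_of_mem_rules (by decide)
    ((derives_balanced u hu.symm).cons ((ih t.length (by omega) t (by omega) rfl).cons_terminal 1))

lemma derives_start (w : List (Fin 2)) (hw : w ∈ zeroBalOneUnbal) :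
    grammar.Derives [nonterminal BalNT.start] (w.map terminal) := by
  match w, hw with
  | 0 :: v, .inl ⟨_, hbal⟩ =>
    obtain ⟨u, t, rfl, hu, ht⟩ :=
      exists_eq_append_cons_of_isBalanced_cons (b := 1) (by decide) hbal
    exact derives_of_mem_rules (by decide)
      ((derives_balanced u hu).cons ((derives_balanced t ht).cons_terminal 1) |>.cons_terminal 0)
  | 1 :: v, .inr ⟨_, hunbal⟩ =>
    rw [IsBalanced, List.count_cons_self, List.count_cons_of_ne (by decide)] at hunbal
    by_cases hv : v.count 0 ≤ v.count 1
    · exact derives_of_mem_rules (by decide) ((derives_onesGe v hv).cons_terminal 1)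
    -- `v` has at least two more `0`s than `1`s: split off two balanced blocks, each followed by `0`
    obtain ⟨u, t, rfl, hu⟩ :=
      List.exists_eq_append_cons_of_count_lt (a := 0) (b := 1) (v := v) (by decide) (by omega)
    simp only [List.count_append, List.count_cons_self, List.count_cons_of_ne zero_ne_one,
      not_le] at hv hunbal
    obtain ⟨u', s, rfl, hu'⟩ :=
      List.exists_eq_append_cons_of_count_lt (a := 0) (b := 1) (v := t) (by decide) (by omega)
    simp only [List.count_append, List.count_cons_self, List.count_cons_of_ne zero_ne_one]
      at hv hunbal
    exact derives_of_mem_rules (by decide)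
      ((derives_balanced u hu).cons ((derives_balanced u' hu').cons
        ((derives_zerosGe s (by omega)).cons_terminal 0) |>.cons_terminal 0) |>.cons_terminal 1)

theorem isCFLang : IsCFLang zeroBalOneUnbal :=
  ⟨grammar, fun w => ⟨fun h => language_le_of_substLang_le BalNT.lang substLang_le h,
    fun h => (mem_language_iff grammar w).2 (derives_start w h)⟩⟩

end zeroBalOneUnbal

/-- Counting-regular languages are not closed under union or intersection with regular
languages: there are a context-free counting-regular `L` and a regular `R` over `{0,1}`
such that neither `L ∩ R` nor `L ∪ R` is counting-regular. -/
theorem stmt13 :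
    ∃ L R : Set (List (Fin 2)), IsCFLang L ∧ CountingRegular L ∧ IsRegularLang R ∧
      ¬ CountingRegular (L ∩ R) ∧ ¬ CountingRegular (L ∪ R) :=
  ⟨zeroBalOneUnbal, nilOrStartsZero, zeroBalOneUnbal.isCFLang, zeroBalOneUnbal.countingRegular,
    isRegularLang_nilOrStartsZero, zeroBalOneUnbal.not_countingRegular_inter_nilOrStartsZero,
    zeroBalOneUnbal.not_countingRegular_union_nilOrStartsZero⟩
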